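/- arXiv:1711.08670 — 3 statements merged into one kernel-verified Lean document; each statement's English description precedes it below -/
import Mathlib

section
/- In the BMW algebra, the elements e_i satisfy e_i e_{i+1} e_i = e_i for i = 1,…,n−2. -/
noncomputable section

open FreeAlgebra

/-- In the free algebra on generators `inl i ↦ s_i`, `inr i ↦ s_i⁻¹`, the element
`z·e_i = s_i⁻¹ - s_i + z·1`. -/
def BMWe (C : Type) [CommRing C] (z : Cˣ) {n : ℕ} (i : Fin n) :
    FreeAlgebra C (Fin n ⊕ Fin n) :=
  ι C (Sum.inr i) - ι C (Sum.inl i) + (z : C) • 1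

/-- Defining relations of the Birman–Murakami–Wenzl algebra with `n` generators
`s_1, …, s_n` (the paper's `BMW_{n+1}`), over a commutative ring `C` with invertible
parameters `a` and `z` (in the paper `z = q - q⁻¹`).  The relations involving
`e_i = (s_i⁻¹ - s_i)/z + 1` are written multiplied through by the unit `z`,
using `z·e_i = s_i⁻¹ - s_i + z·1`, which is equivalent since `z` is invertible. -/
inductive BMWRel (C : Type) [CommRing C] (a z : Cˣ) (n : ℕ) :
    FreeAlgebra C (Fin n ⊕ Fin n) → FreeAlgebra C (Fin n ⊕ Fin n) → Prop
  | mul_inv (i : Fin n) :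
      BMWRel C a z n (ι C (Sum.inl i) * ι C (Sum.inr i)) 1
  | inv_mul (i : Fin n) :
      BMWRel C a z n (ι C (Sum.inr i) * ι C (Sum.inl i)) 1
  | comm (i j : Fin n) (h : (i : ℕ) + 2 ≤ (j : ℕ)) :
      BMWRel C a z n (ι C (Sum.inl i) * ι C (Sum.inl j))
        (ι C (Sum.inl j) * ι C (Sum.inl i))
  | braid (i j : Fin n) (h : (j : ℕ) = (i : ℕ) + 1) :
      BMWRel C a z n (ι C (Sum.inl i) * ι C (Sum.inl j) * ι C (Sum.inl i))
        (ι C (Sum.inl j) * ι C (Sum.inl i) * ι C (Sum.inl j))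
  | es (i : Fin n) :
      BMWRel C a z n (BMWe C z i * ι C (Sum.inl i)) (((a⁻¹ : Cˣ) : C) • BMWe C z i)
  | ese (i j : Fin n) (h : (j : ℕ) = (i : ℕ) + 1) :
      BMWRel C a z n (BMWe C z i * ι C (Sum.inl j) * BMWe C z i)
        (((z : C) * (a : C)) • BMWe C z i)
  | esinve (i j : Fin n) (h : (j : ℕ) = (i : ℕ) + 1) :
      BMWRel C a z n (BMWe C z i * ι C (Sum.inr j) * BMWe C z i)
        (((z : C) * ((a⁻¹ : Cˣ) : C)) • BMWe C z i)

/-- The Birman–Murakami–Wenzl algebra with `n` generators (the paper's `BMW_{n+1}`). -/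
abbrev BMW (C : Type) [CommRing C] (a z : Cˣ) (n : ℕ) : Type :=
  RingQuot (BMWRel C a z n)

variable {C : Type} [CommRing C] {a z : Cˣ} {n : ℕ}

/-- The generator `s_{i+1}`. -/
def BMW.S (i : Fin n) : BMW C a z n :=
  RingQuot.mkAlgHom C (BMWRel C a z n) (ι C (Sum.inl i))

/-- The inverse generator `s_{i+1}⁻¹`. -/
def BMW.Sinv (i : Fin n) : BMW C a z n :=
  RingQuot.mkAlgHom C (BMWRel C a z n) (ι C (Sum.inr i))

/-- The element `e_{i+1} = (s_{i+1}⁻¹ - s_{i+1})/z + 1`. -/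
def BMW.e (i : Fin n) : BMW C a z n :=
  ((z⁻¹ : Cˣ) : C) • (BMW.Sinv i - BMW.S i) + 1

lemma BMW.S_mul_Sinv (i : Fin n) : BMW.S (a := a) (z := z) i * BMW.Sinv i = 1 := by
  have := RingQuot.mkAlgHom_rel C (BMWRel.mul_inv (C := C) (a := a) (z := z) i)
  simp only [map_mul, map_one] at this
  exact this

lemma BMW.Sinv_mul_S (i : Fin n) : BMW.Sinv (a := a) (z := z) i * BMW.S i = 1 := by
  have := RingQuot.mkAlgHom_rel C (BMWRel.inv_mul (C := C) (a := a) (z := z) i)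
  simp only [map_mul, map_one] at this
  exact this

/-- The generator `s_{i+1}` as a unit. -/
def BMW.sU (i : Fin n) : (BMW C a z n)ˣ :=
  ⟨BMW.S i, BMW.Sinv i, BMW.S_mul_Sinv i, BMW.Sinv_mul_S i⟩

lemma BMW.S_comm (i j : Fin n) (h : (i : ℕ) + 2 ≤ (j : ℕ)) :
    BMW.S (a := a) (z := z) i * BMW.S j = BMW.S j * BMW.S i := by
  have := RingQuot.mkAlgHom_rel C (BMWRel.comm (C := C) (a := a) (z := z) i j h)
  simp only [map_mul] at this
  exact this

lemma BMW.S_braid (i j : Fin n) (h : (j : ℕ) = (i : ℕ) + 1) :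
    BMW.S (a := a) (z := z) i * BMW.S j * BMW.S i = BMW.S j * BMW.S i * BMW.S j := by
  have := RingQuot.mkAlgHom_rel C (BMWRel.braid (C := C) (a := a) (z := z) i j h)
  simp only [map_mul] at this
  exact this

/-- The image of `z·e_i` in the BMW algebra. -/
lemma BMW.mk_BMWe (i : Fin n) :
    RingQuot.mkAlgHom C (BMWRel C a z n) (BMWe C z i)
      = BMW.Sinv i - BMW.S i + (z : C) • 1 := by
  simp only [BMWe, map_add, map_sub, map_smul, map_one]
  rfl

lemma BMW.Es (i : Fin n) :
    (BMW.Sinv (a := a) (z := z) i - BMW.S i + (z : C) • 1) * BMW.S i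
      = ((a⁻¹ : Cˣ) : C) • (BMW.Sinv i - BMW.S i + (z : C) • 1) := by
  have := RingQuot.mkAlgHom_rel C (BMWRel.es (C := C) (a := a) (z := z) i)
  simp only [map_mul, map_smul, BMW.mk_BMWe] at this
  exact this

lemma BMW.EsE (i j : Fin n) (h : (j : ℕ) = (i : ℕ) + 1) :
    (BMW.Sinv (a := a) (z := z) i - BMW.S i + (z : C) • 1) * BMW.S j *
        (BMW.Sinv i - BMW.S i + (z : C) • 1)
      = ((z : C) * (a : C)) • (BMW.Sinv i - BMW.S i + (z : C) • 1) := by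
  have := RingQuot.mkAlgHom_rel C (BMWRel.ese (C := C) (a := a) (z := z) i j h)
  simp only [map_mul, map_smul, BMW.mk_BMWe] at this
  exact this

lemma BMW.EsinvE (i j : Fin n) (h : (j : ℕ) = (i : ℕ) + 1) :
    (BMW.Sinv (a := a) (z := z) i - BMW.S i + (z : C) • 1) * BMW.Sinv j *
        (BMW.Sinv i - BMW.S i + (z : C) • 1)
      = ((z : C) * ((a⁻¹ : Cˣ) : C)) • (BMW.Sinv i - BMW.S i + (z : C) • 1) := by
  have := RingQuot.mkAlgHom_rel C (BMWRel.esinve (C := C) (a := a) (z := z) i j h)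
  simp only [map_mul, map_smul, BMW.mk_BMWe] at this
  exact this

/-- The natural embedding `BMW_{m+1} → BMW_{n+1}` (`ι` iterated). -/
def BMW.ιle {m n : ℕ} (h : m ≤ n) : BMW C a z m →ₐ[C] BMW C a z n :=
  RingQuot.liftAlgHom C ⟨FreeAlgebra.lift C
      (Sum.elim (fun i => BMW.S (Fin.castLE h i)) (fun i => BMW.Sinv (Fin.castLE h i))), by
    rintro x y hxy
    induction hxy with
    | mul_inv i =>
        simp only [map_mul, map_one, FreeAlgebra.lift_ι_apply, Sum.elim_inl, Sum.elim_inr]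
        exact BMW.S_mul_Sinv _
    | inv_mul i =>
        simp only [map_mul, map_one, FreeAlgebra.lift_ι_apply, Sum.elim_inl, Sum.elim_inr]
        exact BMW.Sinv_mul_S _
    | comm i j hij =>
        simp only [map_mul, FreeAlgebra.lift_ι_apply, Sum.elim_inl]
        exact BMW.S_comm _ _ (by simpa using hij)
    | braid i j hij =>
        simp only [map_mul, FreeAlgebra.lift_ι_apply, Sum.elim_inl]
        exact BMW.S_braid _ _ (by simpa using hij)
    | es i =>
        simp only [BMWe, map_mul, map_add, map_sub, map_one, map_smul,
          FreeAlgebra.lift_ι_apply, Sum.elim_inl, Sum.elim_inr]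
        exact BMW.Es _
    | ese i j hij =>
        simp only [BMWe, map_mul, map_add, map_sub, map_one, map_smul,
          FreeAlgebra.lift_ι_apply, Sum.elim_inl, Sum.elim_inr]
        exact BMW.EsE _ _ (by simpa using hij)
    | esinve i j hij =>
        simp only [BMWe, map_mul, map_add, map_sub, map_one, map_smul,
          FreeAlgebra.lift_ι_apply, Sum.elim_inl, Sum.elim_inr]
        exact BMW.EsinvE _ _ (by simpa using hij)⟩

/-!
Work with `E_i = z e_i = s_i⁻¹ - s_i + z`. From `E_i s_i = a⁻¹ E_i` one gets `E_i s_i⁻¹ = a E_i`,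
hence `E_i² = (a - a⁻¹ + z) E_i`. Expanding the middle factor of `E_i E_{i+1} E_i` and using
`E_i s_{i+1}^{±1} E_i = z a^{∓1} E_i` gives `z a⁻¹ E_i - z a E_i + z (a - a⁻¹ + z) E_i = z² E_i`;
dividing by `z³` gives `e_i e_{i+1} e_i = e_i`.
-/

namespace BMW

def ze (i : Fin n) : BMW C a z n :=
  Sinv i - S i + (z : C) • 1

lemma e_eq_inv_smul_ze (i : Fin n) : e (a := a) (z := z) i = ((z⁻¹ : Cˣ) : C) • ze i := by
  rw [e, ze, smul_add, smul_smul, Units.inv_mul, one_smul]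

lemma ze_mul_S (i : Fin n) : ze i * S i = ((a⁻¹ : Cˣ) : C) • ze (a := a) (z := z) i :=
  Es i

lemma ze_mul_Sinv (i : Fin n) : ze i * Sinv i = (a : C) • ze (a := a) (z := z) i :=
  calc ze i * Sinv i = ((a : C) • ((a⁻¹ : Cˣ) : C) • ze i) * Sinv i := by
        rw [smul_smul, Units.mul_inv, one_smul]
    _ = (a : C) • (ze i * S i * Sinv i) := by rw [← ze_mul_S, smul_mul_assoc]
    _ = (a : C) • ze i := by rw [mul_assoc, S_mul_Sinv, mul_one]

lemma ze_mul_ze (i : Fin n) :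
    ze i * ze i = ((a : C) - ((a⁻¹ : Cˣ) : C) + z) • ze (a := a) (z := z) i :=
  calc ze i * ze i = ze i * Sinv i - ze i * S i + (z : C) • ze i := by
        rw [ze, mul_add, mul_sub, mul_smul_comm, mul_one]
    _ = _ := by rw [ze_mul_Sinv, ze_mul_S]; module

lemma ze_mul_ze_succ_mul_ze (i j : Fin n) (hij : (j : ℕ) = (i : ℕ) + 1) :
    ze i * ze j * ze i = ((z : C) * z) • ze (a := a) (z := z) i :=
  calc ze i * ze j * ze i
        = ze i * Sinv j * ze i - ze i * S j * ze i + (z : C) • (ze i * ze i) := by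
        rw [show ze (a := a) (z := z) j = Sinv j - S j + (z : C) • 1 from rfl,
          mul_add, mul_sub, add_mul, sub_mul, mul_smul_comm, mul_one, smul_mul_assoc]
    _ = _ := by
        have hSinv : ze i * Sinv j * ze i = ((z : C) * ((a⁻¹ : Cˣ) : C)) • ze i :=
          EsinvE i j hij
        have hS : ze i * S j * ze i = ((z : C) * a) • ze i := EsE i j hij
        rw [hSinv, hS, ze_mul_ze]
        module

end BMW

theorem bmw_e_sandwich_general (C : Type) [CommRing C] (a z : Cˣ) (n : ℕ) (i j : Fin n)
    (hij : (j : ℕ) = (i : ℕ) + 1) :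
    BMW.e (C := C) (a := a) (z := z) i * BMW.e j * BMW.e i = BMW.e i := by
  simp only [BMW.e_eq_inv_smul_ze, smul_mul_assoc, mul_smul_comm, smul_smul,
    BMW.ze_mul_ze_succ_mul_ze i j hij]
  congr 1
  simp [mul_assoc]

/-- In the BMW algebra, the elements `e_i` satisfy
`e_i e_{i+1} e_i = e_i` for `i = 1, …, n−2`. -/
theorem bmw_e_sandwich (C : Type) [CommRing C] (a q z : Cˣ)
    (hz : (z : C) = (q : C) - ((q⁻¹ : Cˣ) : C)) (n : ℕ) (i j : Fin n)
    (hij : (j : ℕ) = (i : ℕ) + 1) :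
    BMW.e (C := C) (a := a) (z := z) i * BMW.e j * BMW.e i = BMW.e i :=
  bmw_e_sandwich_general C a z n i j hij
end
end

section
/- In the Hecke algebra H_n, a family of linear maps (t_n) satisfying the trace and stabilization properties necessarily satisfies the inclusion property t_{n+1}(ι_n(u)) = δ^H t_n(u) for all u ∈ H_n, where δ^H = (a−a^{−1})/(q−q^{−1}). Consequently the space of Markov traces on the tower of Hecke algebras is one-dimensional, determined by t_1(1). -/
/-!
Indices as in the Lean definitions: `H_m = Hecke C z m` has generators `σ_0, …, σ_{m-1}`, and
`ι : H_m → H_{m+1}`.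

Subtracting the two stabilization identities at `v = 1` gives
`z · t_{m+1}(ι u) = (a - a⁻¹) · t_m(u)` (as `σ_m - σ_m⁻¹ = z`), which is the inclusion property
since `z` is a unit.

For uniqueness, `H_{m+1} = ι(H_m) + ι(H_m) σ_m ι(H_m)`: in the idempotent semiring of submodules,
`M + M Σ M` (with `M = ι(H_m)`, `Σ = C σ_m`) is closed under multiplication as soon as
`Σ M Σ ≤ M + M Σ M`, and by induction on `m` this follows from the quadratic, braid and far
commutation relations. On both summands a Markov trace is determined by `t_m` (by inclusion and by
stabilization), so two Markov traces agreeing on `H_0 = C` agree everywhere.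
-/

noncomputable section

/-- Defining relations of the Hecke algebra with `n` generators
(the paper's `H_{n+1}`), over a commutative ring `C` with quadratic
parameter `z` (in the paper `z = q - q⁻¹`). -/
inductive HeckeRel (C : Type) [CommRing C] (z : C) (n : ℕ) :
    FreeAlgebra C (Fin n) → FreeAlgebra C (Fin n) → Prop
  | comm (i j : Fin n) (h : (i : ℕ) + 2 ≤ (j : ℕ)) :
      HeckeRel C z n (FreeAlgebra.ι C i * FreeAlgebra.ι C j)
        (FreeAlgebra.ι C j * FreeAlgebra.ι C i)
  | braid (i j : Fin n) (h : (j : ℕ) = (i : ℕ) + 1) :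
      HeckeRel C z n (FreeAlgebra.ι C i * FreeAlgebra.ι C j * FreeAlgebra.ι C i)
        (FreeAlgebra.ι C j * FreeAlgebra.ι C i * FreeAlgebra.ι C j)
  | quad (i : Fin n) :
      HeckeRel C z n (FreeAlgebra.ι C i * FreeAlgebra.ι C i)
        (1 + z • FreeAlgebra.ι C i)

/-- The Hecke algebra with `n` generators `σ_1, …, σ_n` (the paper's `H_{n+1}`). -/
abbrev Hecke (C : Type) [CommRing C] (z : C) (n : ℕ) : Type :=
  RingQuot (HeckeRel C z n)

variable {C : Type} [CommRing C] {z : C} {n : ℕ}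

/-- The generator `σ_{i+1}` of the Hecke algebra. -/
def Hecke.σ (i : Fin n) : Hecke C z n :=
  RingQuot.mkAlgHom C (HeckeRel C z n) (FreeAlgebra.ι C i)

lemma Hecke.σ_comm (i j : Fin n) (h : (i : ℕ) + 2 ≤ (j : ℕ)) :
    Hecke.σ (z := z) i * Hecke.σ j = Hecke.σ j * Hecke.σ i := by
  have := RingQuot.mkAlgHom_rel C (HeckeRel.comm (C := C) (z := z) i j h)
  simp only [map_mul] at this
  exact this

lemma Hecke.σ_braid (i j : Fin n) (h : (j : ℕ) = (i : ℕ) + 1) :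
    Hecke.σ (z := z) i * Hecke.σ j * Hecke.σ i = Hecke.σ j * Hecke.σ i * Hecke.σ j := by
  have := RingQuot.mkAlgHom_rel C (HeckeRel.braid (C := C) (z := z) i j h)
  simp only [map_mul] at this
  exact this

lemma Hecke.σ_quad (i : Fin n) :
    Hecke.σ (z := z) i * Hecke.σ i = 1 + z • Hecke.σ i := by
  have := RingQuot.mkAlgHom_rel C (HeckeRel.quad (C := C) (z := z) i)
  simp only [map_mul, map_add, map_one, map_smul] at this
  exact this

lemma Hecke.σ_mul_inv (i : Fin n) :
    Hecke.σ (z := z) i * (Hecke.σ i - z • 1) = 1 := by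
  rw [mul_sub, Hecke.σ_quad, mul_smul_comm, mul_one]; abel

lemma Hecke.inv_mul_σ (i : Fin n) :
    (Hecke.σ (z := z) i - z • 1) * Hecke.σ i = 1 := by
  rw [sub_mul, Hecke.σ_quad, smul_mul_assoc, one_mul]; abel

/-- The generator `σ_{i+1}` as a unit. -/
def Hecke.σU (i : Fin n) : (Hecke C z n)ˣ :=
  ⟨Hecke.σ i, Hecke.σ i - z • 1, Hecke.σ_mul_inv i, Hecke.inv_mul_σ i⟩

/-- The natural embedding `H_{m+1} → H_{n+1}` (`ι` iterated). -/
def Hecke.ιle {m n : ℕ} (h : m ≤ n) : Hecke C z m →ₐ[C] Hecke C z n :=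
  RingQuot.liftAlgHom C ⟨FreeAlgebra.lift C (fun i => Hecke.σ (Fin.castLE h i)), by
    rintro x y hxy
    induction hxy with
    | comm i j hij =>
        simp only [map_mul, FreeAlgebra.lift_ι_apply]
        exact Hecke.σ_comm _ _ (by simpa using hij)
    | braid i j hij =>
        simp only [map_mul, FreeAlgebra.lift_ι_apply]
        exact Hecke.σ_braid _ _ (by simpa using hij)
    | quad i =>
        simp only [map_mul, map_add, map_one, map_smul, FreeAlgebra.lift_ι_apply]
        exact Hecke.σ_quad _⟩

/-- The shift morphism `sh^m : H_{l+1} → H_{l+m+1}`, sending `σ_i` to `σ_{i+m}`. -/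
def Hecke.shift (m : ℕ) {l : ℕ} : Hecke C z l →ₐ[C] Hecke C z (m + l) :=
  RingQuot.liftAlgHom C ⟨FreeAlgebra.lift C (fun i => Hecke.σ (Fin.natAdd m i)), by
    rintro x y hxy
    induction hxy with
    | comm i j hij =>
        simp only [map_mul, FreeAlgebra.lift_ι_apply]
        exact Hecke.σ_comm _ _ (by simp [Fin.natAdd]; omega)
    | braid i j hij =>
        simp only [map_mul, FreeAlgebra.lift_ι_apply]
        exact Hecke.σ_braid _ _ (by simp [Fin.natAdd]; omega)
    | quad i =>
        simp only [map_mul, map_add, map_one, map_smul, FreeAlgebra.lift_ι_apply]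
        exact Hecke.σ_quad _⟩


/-- A Markov trace on the tower of Hecke algebras: a family of `R`-linear maps
`t_n : H_n → R` with the trace property and the (positive and negative) stabilization
properties; here `σ_n⁻¹ = σ_n − z`. -/
def IsHeckeMarkovTrace {C : Type} [CommRing C] (a : Cˣ) (z : C)
    (t : ∀ m : ℕ, Hecke C z m →ₗ[C] C) : Prop :=
  (∀ (m : ℕ) (u v : Hecke C z m), t m (u * v) = t m (v * u)) ∧
  (∀ (m : ℕ) (u v : Hecke C z m),
    t (m + 1) (Hecke.ιle (Nat.le_succ m) u * Hecke.σ (Fin.last m) *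
        Hecke.ιle (Nat.le_succ m) v) = (a : C) * t m (u * v)) ∧
  (∀ (m : ℕ) (u v : Hecke C z m),
    t (m + 1) (Hecke.ιle (Nat.le_succ m) u * (Hecke.σ (Fin.last m) - z • 1) *
        Hecke.ιle (Nat.le_succ m) v) = ((a⁻¹ : Cˣ) : C) * t m (u * v))

theorem IsIdempotentElem.sup_mul_mul {α : Type*} [IdemSemiring α] {m : α}
    (hm : IsIdempotentElem m) {n : α} (hn : n * m * n ≤ m ⊔ m * n * m) :
    IsIdempotentElem (m ⊔ m * n * m) := by
  generalize hs : m ⊔ m * n * m = s at hn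
  rw [← add_eq_sup] at hs
  have hms : m * s = s := by rw [← hs, mul_add, ← mul_assoc, ← mul_assoc, hm.eq]
  have hsm : s * m = s := by rw [← hs, add_mul, mul_assoc _ m, hm.eq]
  have hmnm : m * n * m ≤ s := hs ▸ le_add_self
  have hmnmnm : m * n * (m * n * m) ≤ s :=
    calc m * n * (m * n * m) = m * (n * m * n) * m := by simp only [mul_assoc]
      _ ≤ m * s * m := mul_le_mul' (mul_le_mul_right hn m) le_rfl
      _ = s := by rw [hms, hsm]
  calc s * s = m * s + m * n * (m * s) := by rw [← hs, add_mul, hs, mul_assoc _ m]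
    _ = s + m * n * m + m * n * (m * n * m) := by rw [hms, ← hs, mul_add, ← add_assoc, hs]
    _ = s := by rw [hmnm.add_eq_left, hmnmnm.add_eq_left]

/-- In `H_{k+2}` this applies to `m' = ι(H_k)`, `n = C σ_{k+1}`, `n' = C σ_k`. -/
theorem mul_mul_le_sup_mul_mul_of_braid {α : Type*} [IdemSemiring α] {m m' n n' : α}
    (hm : m = m' ⊔ m' * n' * m') (h1 : 1 ≤ m') (hcomm : n * m' = m' * n)
    (hquad : n * n ≤ 1 ⊔ n) (hbraid : n * n' * n = n' * n * n') :
    n * m * n ≤ m ⊔ m * n * m := by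
  have hm'm : m' ≤ m := hm ▸ le_sup_left
  have h1m : 1 ≤ m := h1.trans hm'm
  have hm'n' : m' * n' ≤ m :=
    calc m' * n' = m' * n' * 1 := (mul_one _).symm
      _ ≤ m' * n' * m' := mul_le_mul_right h1 _
      _ ≤ m := hm ▸ le_sup_right
  have hn'm' : n' * m' ≤ m :=
    calc n' * m' = 1 * n' * m' := by rw [one_mul]
      _ ≤ m' * n' * m' := mul_le_mul_left (mul_le_mul_left h1 _) _
      _ ≤ m := hm ▸ le_sup_right
  have hm'n : m' * n ≤ m * n * m :=
    calc m' * n = m' * n * 1 := (mul_one _).symm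
      _ ≤ m * n * m := mul_le_mul' (mul_le_mul_left hm'm _) h1m
  calc n * m * n = m' * (n * n) ⊔ m' * (n * n' * n) * m' := by
        simp only [hm, ← add_eq_sup, mul_add, add_mul, mul_assoc, ← mul_assoc n m', hcomm]
    _ ≤ m' * (1 ⊔ n) ⊔ m' * n' * n * (n' * m') := by
        rw [hbraid]
        exact sup_le_sup (mul_le_mul_right hquad _) (le_of_eq (by simp only [mul_assoc]))
    _ ≤ m ⊔ m * n * m := by
        rw [← add_eq_sup 1 n, mul_add, mul_one, add_eq_sup]
        exact sup_le (sup_le (le_sup_of_le_left hm'm) (le_sup_of_le_right hm'n))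
          (le_sup_of_le_right (mul_le_mul' (mul_le_mul_left hm'n' _) hn'm'))

namespace Hecke

@[elab_as_elim]
lemma induction_on {p : Hecke C z n → Prop} (x : Hecke C z n)
    (algebraMap : ∀ c : C, p (algebraMap C _ c)) (σ : ∀ i, p (σ i))
    (mul : ∀ x y, p x → p y → p (x * y)) (add : ∀ x y, p x → p y → p (x + y)) : p x := by
  obtain ⟨y, rfl⟩ := RingQuot.mkAlgHom_surjective C (HeckeRel C z n) x
  induction y using FreeAlgebra.induction with
  | grade0 c => rw [AlgHom.commutes]; exact algebraMap c
  | grade1 i => exact σ i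
  | mul a b ha hb => rw [map_mul]; exact mul _ _ ha hb
  | add a b ha hb => rw [map_add]; exact add _ _ ha hb

lemma exists_algebraMap_eq (x : Hecke C z 0) : ∃ c : C, algebraMap C _ c = x := by
  induction x using induction_on with
  | algebraMap c => exact ⟨c, rfl⟩
  | σ i => exact i.elim0
  | mul x y hx hy =>
      obtain ⟨c, rfl⟩ := hx; obtain ⟨d, rfl⟩ := hy
      exact ⟨c * d, map_mul _ _ _⟩
  | add x y hx hy =>
      obtain ⟨c, rfl⟩ := hx; obtain ⟨d, rfl⟩ := hy
      exact ⟨c + d, map_add _ _ _⟩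

lemma algHom_ext {A : Type} [Semiring A] [Algebra C A] {f g : Hecke C z n →ₐ[C] A}
    (h : ∀ i, f (σ i) = g (σ i)) : f = g := by
  refine AlgHom.ext fun x => ?_
  induction x using induction_on with
  | algebraMap c => rw [AlgHom.commutes, AlgHom.commutes]
  | σ i => exact h i
  | mul x y hx hy => rw [map_mul, map_mul, hx, hy]
  | add x y hx hy => rw [map_add, map_add, hx, hy]

@[simp]
lemma ιle_σ {m n : ℕ} (h : m ≤ n) (i : Fin m) :
    ιle (z := z) h (σ i) = σ (Fin.castLE h i) := by
  rw [ιle, σ, RingQuot.liftAlgHom_mkAlgHom_apply, FreeAlgebra.lift_ι_apply]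

lemma ιle_comp_ιle {k m n : ℕ} (h₁ : k ≤ m) (h₂ : m ≤ n) :
    (ιle (z := z) h₂).comp (ιle h₁) = ιle (h₁.trans h₂) :=
  algHom_ext fun i => by simp

lemma commute_ιle_σ {k : ℕ} (h : k ≤ n) (j : Fin n) (hj : k + 1 ≤ (j : ℕ)) (u : Hecke C z k) :
    Commute (ιle (z := z) h u) (σ j) := by
  induction u using induction_on with
  | algebraMap c => rw [AlgHom.commutes]; exact Algebra.commutes c _
  | σ i => rw [ιle_σ]; exact σ_comm _ j (by simp only [Fin.val_castLE]; omega)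
  | mul x y hx hy => rw [map_mul]; exact hx.mul_left hy
  | add x y hx hy => rw [map_add]; exact hx.add_left hy

abbrev ιleRange {m n : ℕ} (h : m ≤ n) : Submodule C (Hecke C z n) :=
  Subalgebra.toSubmodule (ιle h).range

lemma one_le_ιleRange {m n : ℕ} (h : m ≤ n) : 1 ≤ ιleRange (z := z) h :=
  Submodule.one_le.mpr (one_mem (ιle h).range)

lemma span_σ_mul_self_le (i : Fin n) :
    (C ∙ σ (z := z) i) * (C ∙ σ i) ≤ 1 ⊔ (C ∙ σ i) := by
  rw [Submodule.span_mul_span, Set.singleton_mul_singleton, σ_quad, Submodule.span_le,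
    Set.singleton_subset_iff]
  exact Submodule.add_mem_sup (Submodule.one_le.mp le_rfl)
    (Submodule.smul_mem _ _ (Submodule.mem_span_singleton_self _))

def markovSpan (z : C) (m : ℕ) : Submodule C (Hecke C z (m + 1)) :=
  ιleRange (Nat.le_succ m) ⊔ ιleRange (Nat.le_succ m) * (C ∙ σ (Fin.last m)) *
    ιleRange (Nat.le_succ m)

lemma markovSpan_le_iff {m : ℕ} {P : Submodule C (Hecke C z (m + 1))} :
    markovSpan z m ≤ P ↔ (∀ u, ιle (Nat.le_succ m) u ∈ P) ∧
      ∀ v w, ιle (Nat.le_succ m) v * σ (Fin.last m) * ιle (Nat.le_succ m) w ∈ P := by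
  rw [markovSpan, sup_le_iff, Submodule.mul_le]
  simp [Submodule.mem_mul_span_singleton, SetLike.le_def]

lemma one_sup_span_σ_le_markovSpan (m : ℕ) :
    1 ⊔ (C ∙ σ (Fin.last m)) ≤ markovSpan z m := by
  have h1 := one_le_ιleRange (z := z) (Nat.le_succ m)
  refine sup_le (h1.trans le_sup_left) (le_sup_of_le_right ?_)
  calc C ∙ σ (Fin.last m) = 1 * (C ∙ σ (Fin.last m)) * 1 := by rw [one_mul, mul_one]
    _ ≤ _ := mul_le_mul' (mul_le_mul_left h1 _) h1

lemma markovSpan_eq_top_of_le {m : ℕ}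
    (h : (C ∙ σ (Fin.last m)) * ιleRange (Nat.le_succ m) * (C ∙ σ (Fin.last m)) ≤
      markovSpan z m) :
    markovSpan z m = ⊤ := by
  have hidem : IsIdempotentElem (markovSpan z m) :=
    (Subalgebra.isIdempotentElem_toSubmodule _).sup_mul_mul h
  refine Submodule.eq_top_iff'.mpr fun x => ?_
  induction x using induction_on with
  | algebraMap c => exact le_sup_left (a := ιleRange _) ((ιle _).range.algebraMap_mem c)
  | σ i =>
      induction i using Fin.lastCases with
      | last =>
          exact one_sup_span_σ_le_markovSpan m
            (Submodule.mem_sup_right (Submodule.mem_span_singleton_self _))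
      | cast j =>
          have hj : ιle (Nat.le_succ m) (σ j) = σ (z := z) j.castSucc := by rw [ιle_σ]; rfl
          exact hj ▸ (markovSpan_le_iff.mp le_rfl).1 (σ j)
  | mul x y hx hy => exact hidem.eq ▸ Submodule.mul_mem_mul hx hy
  | add x y hx hy => exact add_mem hx hy

lemma ιleRange_eq_map_top {m n : ℕ} (h : m ≤ n) :
    ιleRange (z := z) h = (⊤ : Submodule C (Hecke C z m)).map (ιle h).toLinearMap := by
  rw [← Algebra.top_toSubmodule, ← Subalgebra.map_toSubmodule, Algebra.map_top]

lemma map_ιleRange {k m n : ℕ} (h₁ : k ≤ m) (h₂ : m ≤ n) :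
    (ιleRange (z := z) h₁).map (ιle h₂).toLinearMap = ιleRange (h₁.trans h₂) := by
  rw [← Subalgebra.map_toSubmodule, ← AlgHom.range_comp, ιle_comp_ιle]

lemma ιleRange_le_one {n : ℕ} (h : 0 ≤ n) : ιleRange (z := z) h ≤ 1 := by
  rintro _ ⟨x, rfl⟩
  obtain ⟨c, rfl⟩ := exists_algebraMap_eq x
  change ιle h (algebraMap C _ c) ∈ 1
  rw [AlgHom.commutes]
  exact Submodule.algebraMap_mem c

lemma span_σ_mul_comm_ιleRange {k : ℕ} (h : k ≤ n) (j : Fin n) (hj : k + 1 ≤ (j : ℕ)) :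
    (C ∙ σ j) * ιleRange (z := z) h = ιleRange h * (C ∙ σ j) := by
  refine Submodule.mul_comm_of_commute fun s hs _ ⟨u, hu⟩ => ?_
  obtain ⟨c, rfl⟩ := Submodule.mem_span_singleton.mp hs
  exact hu ▸ ((commute_ιle_σ h j hj u).smul_right c).symm

lemma span_σ_braid (i j : Fin n) (h : (j : ℕ) = (i : ℕ) + 1) :
    (C ∙ σ (z := z) j) * (C ∙ σ i) * (C ∙ σ j) = (C ∙ σ i) * (C ∙ σ j) * (C ∙ σ i) := by
  simp only [Submodule.span_mul_span, Set.singleton_mul_singleton, σ_braid i j h]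

lemma span_σ_mul_ιleRange_mul_span_σ_le_zero :
    (C ∙ σ (Fin.last 0)) * ιleRange (Nat.le_succ 0) * (C ∙ σ (Fin.last 0)) ≤
      markovSpan z 0 :=
  calc _ ≤ (C ∙ σ (Fin.last 0)) * 1 * (C ∙ σ (Fin.last 0)) :=
        mul_le_mul' (mul_le_mul_right (ιleRange_le_one _) _) le_rfl
    _ ≤ 1 ⊔ (C ∙ σ (Fin.last 0)) := by rw [mul_one]; exact span_σ_mul_self_le _
    _ ≤ markovSpan z 0 := one_sup_span_σ_le_markovSpan 0

lemma ιleRange_succ_eq {k : ℕ} (hk : markovSpan z k = ⊤) :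
    ιleRange (z := z) (Nat.le_succ (k + 1)) =
      ιleRange (k.le_succ.trans (k + 1).le_succ) ⊔
        ιleRange (k.le_succ.trans (k + 1).le_succ) *
          (C ∙ σ (Fin.castLE (k + 1).le_succ (Fin.last k))) *
          ιleRange (k.le_succ.trans (k + 1).le_succ) := by
  rw [ιleRange_eq_map_top, ← hk, markovSpan, Submodule.map_sup, Submodule.map_mul,
    Submodule.map_mul, map_ιleRange, Submodule.map_span, Set.image_singleton,
    AlgHom.toLinearMap_apply, ιle_σ]

lemma markovSpan_eq_top (z : C) (m : ℕ) : markovSpan z m = ⊤ := by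
  induction m with
  | zero => exact markovSpan_eq_top_of_le span_σ_mul_ιleRange_mul_span_σ_le_zero
  | succ k ih =>
      exact markovSpan_eq_top_of_le (mul_mul_le_sup_mul_mul_of_braid (ιleRange_succ_eq ih)
        (one_le_ιleRange _) (span_σ_mul_comm_ιleRange _ _ (by simp)) (span_σ_mul_self_le _)
        (span_σ_braid _ _ (by simp)))

end Hecke

namespace IsHeckeMarkovTrace

variable {a : Cˣ}

lemma mul_apply_ιle {t : ∀ m : ℕ, Hecke C z m →ₗ[C] C} (ht : IsHeckeMarkovTrace a z t)
    (m : ℕ) (u : Hecke C z m) :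
    z * t (m + 1) (Hecke.ιle (Nat.le_succ m) u) = ((a : C) - ((a⁻¹ : Cˣ) : C)) * t m u := by
  have hpos := ht.2.1 m u 1
  have hneg := ht.2.2 m u 1
  simp only [map_one, mul_one, mul_sub, mul_smul_comm, map_sub, map_smul, smul_eq_mul] at hpos hneg
  rw [sub_mul, ← hpos, ← hneg]
  ring

lemma apply_ιle {z : Cˣ} {t : ∀ m : ℕ, Hecke C (z : C) m →ₗ[C] C}
    (ht : IsHeckeMarkovTrace a (z : C) t) (m : ℕ) (u : Hecke C (z : C) m) :
    t (m + 1) (Hecke.ιle (Nat.le_succ m) u)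
      = (((a : C) - ((a⁻¹ : Cˣ) : C)) * ((z⁻¹ : Cˣ) : C)) * t m u := by
  rw [mul_right_comm, ← ht.mul_apply_ιle, mul_right_comm, Units.mul_inv, one_mul]

lemma unique {z : Cˣ} {t t' : ∀ m : ℕ, Hecke C (z : C) m →ₗ[C] C}
    (ht : IsHeckeMarkovTrace a (z : C) t) (ht' : IsHeckeMarkovTrace a (z : C) t')
    (h₀ : t' 0 1 = t 0 1) : t' = t := by
  funext m
  induction m with
  | zero =>
      refine LinearMap.ext fun x => ?_
      obtain ⟨c, rfl⟩ := Hecke.exists_algebraMap_eq x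
      rw [Algebra.algebraMap_eq_smul_one, map_smul, map_smul, h₀]
  | succ k ih =>
      rw [← LinearMap.eqLocus_eq_top, eq_top_iff, ← Hecke.markovSpan_eq_top,
        Hecke.markovSpan_le_iff]
      refine ⟨fun u => ?_, fun v w => ?_⟩
      · rw [LinearMap.mem_eqLocus, ht'.apply_ιle, ht.apply_ιle, ih]
      · rw [LinearMap.mem_eqLocus, ht'.2.1, ht.2.1, ih]

end IsHeckeMarkovTrace

theorem hecke_markov_trace_inclusion_and_unique_general (C : Type) [CommRing C]
    (a z : Cˣ)
    (t : ∀ m : ℕ, Hecke C (z : C) m →ₗ[C] C)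
    (ht : IsHeckeMarkovTrace a (z : C) t) :
    (∀ (m : ℕ) (u : Hecke C (z : C) m),
      t (m + 1) (Hecke.ιle (Nat.le_succ m) u)
        = (((a : C) - ((a⁻¹ : Cˣ) : C)) * ((z⁻¹ : Cˣ) : C)) * t m u) ∧
    (∀ t' : ∀ m : ℕ, Hecke C (z : C) m →ₗ[C] C,
      IsHeckeMarkovTrace a (z : C) t' → t' 0 1 = t 0 1 → t' = t) :=
  ⟨ht.apply_ιle, fun _ ht' h₀ => ht.unique ht' h₀⟩

/-- A family of linear maps on the tower of Hecke algebras satisfying the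
trace and stabilization properties necessarily satisfies the inclusion property
`t_{n+1}(ι_n(u)) = δ^H t_n(u)` with `δ^H = (a−a⁻¹)/(q−q⁻¹)`; consequently the space of Markov
traces is one-dimensional, determined by the value `t_1(1)`. -/
theorem hecke_markov_trace_inclusion_and_unique (C : Type) [CommRing C]
    (a q z : Cˣ) (hz : (z : C) = (q : C) - ((q⁻¹ : Cˣ) : C))
    (t : ∀ m : ℕ, Hecke C (z : C) m →ₗ[C] C)
    (ht : IsHeckeMarkovTrace a (z : C) t) :
    (∀ (m : ℕ) (u : Hecke C (z : C) m),
      t (m + 1) (Hecke.ιle (Nat.le_succ m) u)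
        = (((a : C) - ((a⁻¹ : Cˣ) : C)) * ((z⁻¹ : Cˣ) : C)) * t m u) ∧
    (∀ t' : ∀ m : ℕ, Hecke C (z : C) m →ₗ[C] C,
      IsHeckeMarkovTrace a (z : C) t' → t' 0 1 = t 0 1 → t' = t) :=
  hecke_markov_trace_inclusion_and_unique_general C a z t ht
end
end

section
/- Let (t_n) be a family of linear maps on the tower of BMW algebras satisfying the stabilization property t_{n+1}(u s_n^{±1} v) = a^{±1} t_n(uv) and the inclusion property t_{n+1}(ι_n(u)) = δ t_n(u) with δ = (a−a^{−1})/(q−q^{−1}) + 1. Then for all k, l ∈ ℤ and u, v, w ∈ BMW_{n−1}, t_{n+1}(u s_{n−1}^k v s_n^l w) = t_{n+1}(u s_{n−1}^l v s_n^k w). -/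
noncomputable section

open FreeAlgebra

variable {C : Type} [CommRing C] {a z : Cˣ} {n : ℕ}

/-- A family of linear maps on the tower of BMW algebras satisfying the (positive and
negative) stabilization property and the inclusion property with parameter `d`. -/
def IsBMWStabIncl {C : Type} [CommRing C] (a z : Cˣ) (d : C)
    (t : ∀ m : ℕ, BMW C a z m →ₗ[C] C) : Prop :=
  (∀ (m : ℕ) (u v : BMW C a z m),
    t (m + 1) (BMW.ιle (Nat.le_succ m) u * BMW.S (Fin.last m) *
        BMW.ιle (Nat.le_succ m) v) = (a : C) * t m (u * v)) ∧
  (∀ (m : ℕ) (u v : BMW C a z m),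
    t (m + 1) (BMW.ιle (Nat.le_succ m) u * BMW.Sinv (Fin.last m) *
        BMW.ιle (Nat.le_succ m) v) = ((a⁻¹ : Cˣ) : C) * t m (u * v)) ∧
  (∀ (m : ℕ) (u : BMW C a z m),
    t (m + 1) (BMW.ιle (Nat.le_succ m) u) = d * t m u)

/-! The powers `s_i^k` all lie in the span of `1, s_i, s_i⁻¹`, with coefficients that do not
depend on `i`, because `e_i s_i^{±1} = a^{∓1} e_i` makes `s_i` satisfy a quadratic relation.
On such a combination placed at the top generator, stabilization and inclusion make the trace
act by the scalar `α d + β a + γ a⁻¹`. Peeling off `s_n^l` and then `s_{n-1}^k` therefore gives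
`t_{n+1}(u s_{n-1}^k v s_n^l w) = c_k c_l t_{n-1}(u v w)`, which is symmetric in `k` and `l`. -/

namespace BMW

variable {C : Type} [CommRing C] {a z : Cˣ} {n : ℕ}

lemma ιle_S {m : ℕ} (h : m ≤ n) (i : Fin m) :
    ιle (C := C) (a := a) (z := z) h (S i) = S (Fin.castLE h i) := by
  simp [ιle, S, RingQuot.liftAlgHom_mkAlgHom_apply]

lemma ιle_Sinv {m : ℕ} (h : m ≤ n) (i : Fin m) :
    ιle (C := C) (a := a) (z := z) h (Sinv i) = Sinv (Fin.castLE h i) := by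
  simp [ιle, Sinv, RingQuot.liftAlgHom_mkAlgHom_apply]

lemma ιle_comp_ιle {k m : ℕ} (h₁ : k ≤ m) (h₂ : m ≤ n) :
    (ιle (C := C) (a := a) (z := z) h₂).comp (ιle h₁) = ιle (h₁.trans h₂) := by
  refine RingQuot.ringQuot_ext' _ _ _ (FreeAlgebra.hom_ext (funext fun i => ?_))
  rcases i with i | i
  · exact (congrArg _ (ιle_S h₁ i)).trans ((ιle_S h₂ _).trans (ιle_S _ i).symm)
  · exact (congrArg _ (ιle_Sinv h₁ i)).trans ((ιle_Sinv h₂ _).trans (ιle_Sinv _ i).symm)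

lemma ιle_ιle {k m : ℕ} (h₁ : k ≤ m) (h₂ : m ≤ n) (x : BMW C a z k) :
    ιle (a := a) (z := z) h₂ (ιle h₁ x) = ιle (h₁.trans h₂) x :=
  AlgHom.congr_fun (ιle_comp_ιle h₁ h₂) x

lemma S_mul_S (i : Fin n) :
    S (a := a) (z := z) i * S i =
      (1 - ((a⁻¹ : Cˣ) : C) * z) • 1 + ((z : C) + ((a⁻¹ : Cˣ) : C)) • S i
        + (-((a⁻¹ : Cˣ) : C)) • Sinv i := by
  have h := Es (a := a) (z := z) i
  rw [add_mul, sub_mul, smul_mul_assoc, one_mul, Sinv_mul_S] at h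
  linear_combination (norm := module) -h

lemma Sinv_mul_Sinv (i : Fin n) :
    Sinv (a := a) (z := z) i * Sinv i =
      ((a : C) * z + 1) • 1 + (-(a : C)) • S i + ((a : C) - z) • Sinv i := by
  have h := congrArg (fun x => (a : C) • (x * Sinv (a := a) (z := z) i)) (Es (a := a) (z := z) i)
  simp only [mul_assoc, S_mul_Sinv, mul_one, smul_mul_assoc, smul_smul, Units.mul_inv,
    one_smul, sub_mul, add_mul, one_mul, Sinv_mul_S] at h
  linear_combination (norm := module) -h

variable (a z) in
def comb (α β γ : C) (i : Fin n) : BMW C a z n :=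
  α • 1 + β • S i + γ • Sinv i

lemma comb_mul_S (α β γ : C) (i : Fin n) :
    comb a z α β γ i * S i =
      comb a z (γ + β * (1 - ((a⁻¹ : Cˣ) : C) * z)) (α + β * (z + ((a⁻¹ : Cˣ) : C)))
        (-(β * ((a⁻¹ : Cˣ) : C))) i := by
  simp only [comb, add_mul, smul_mul_assoc, one_mul, S_mul_S, Sinv_mul_S]
  module

lemma comb_mul_Sinv (α β γ : C) (i : Fin n) :
    comb a z α β γ i * Sinv i =
      comb a z (β + γ * ((a : C) * z + 1)) (-(γ * a)) (α + γ * ((a : C) - z)) i := by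
  simp only [comb, add_mul, smul_mul_assoc, one_mul, Sinv_mul_Sinv, S_mul_Sinv]
  module

lemma exists_zpow_sU_eq_comb (k : ℤ) :
    ∃ α β γ : C, ∀ (n : ℕ) (i : Fin n),
      ((sU (a := a) (z := z) i ^ k : (BMW C a z n)ˣ) : BMW C a z n) = comb a z α β γ i := by
  induction k using Int.induction_on with
  | zero => exact ⟨1, 0, 0, fun n i => by simp [comb]⟩
  | succ k ih =>
    obtain ⟨α, β, γ, ih⟩ := ih
    exact ⟨_, _, _, fun n i => by rw [zpow_add_one, Units.val_mul, ih]; exact comb_mul_S α β γ i⟩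
  | pred k ih =>
    obtain ⟨α, β, γ, ih⟩ := ih
    exact ⟨_, _, _, fun n i => by
      rw [zpow_sub_one, Units.val_mul, ih]; exact comb_mul_Sinv α β γ i⟩

lemma ιle_comb {m : ℕ} (h : m ≤ n) (α β γ : C) (i : Fin m) :
    ιle h (comb a z α β γ i) = comb a z α β γ (Fin.castLE h i) := by
  simp only [comb, map_add, map_smul, map_one, ιle_S, ιle_Sinv]

end BMW

namespace IsBMWStabIncl

open BMW

variable {C : Type} [CommRing C] {a z : Cˣ} {d : C} {t : ∀ m : ℕ, BMW C a z m →ₗ[C] C}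

lemma apply_mul_comb_mul (ht : IsBMWStabIncl a z d t) (m : ℕ) (α β γ : C)
    (u v : BMW C a z m) :
    t (m + 1) (ιle (Nat.le_succ m) u * comb a z α β γ (Fin.last m) * ιle (Nat.le_succ m) v)
      = (α * d + β * a + γ * ((a⁻¹ : Cˣ) : C)) * t m (u * v) := by
  obtain ⟨hS, hSinv, hincl⟩ := ht
  simp only [comb, mul_add, add_mul, mul_smul_comm, smul_mul_assoc, mul_one, map_add,
    map_smul, ← map_mul, hincl, hS, hSinv, smul_eq_mul]
  ring

lemma apply_comb_mul_comb_mul (ht : IsBMWStabIncl a z d t) (m : ℕ) (α β γ α' β' γ' : C)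
    (u v w : BMW C a z m) :
    t (m + 2) (ιle (m.le_add_right 2) u * comb a z α β γ (Fin.last m).castSucc *
        ιle (m.le_add_right 2) v * comb a z α' β' γ' (Fin.last (m + 1)) *
        ιle (m.le_add_right 2) w)
      = (α * d + β * a + γ * ((a⁻¹ : Cˣ) : C)) * (α' * d + β' * a + γ' * ((a⁻¹ : Cˣ) : C)) *
          t m (u * (v * w)) := by
  have hcomb : comb a z α β γ (Fin.last m).castSucc
      = ιle (Nat.le_succ (m + 1)) (comb a z α β γ (Fin.last m)) := by
    rw [ιle_comb]; rfl
  simp only [← ιle_ιle (Nat.le_succ m) (Nat.le_succ (m + 1)), hcomb, ← map_mul]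
  rw [ht.apply_mul_comb_mul, mul_assoc, ← map_mul, ht.apply_mul_comb_mul]
  ring

end IsBMWStabIncl

theorem bmw_stab_incl_swap_powers (C : Type) [CommRing C] (a z : Cˣ)
    (t : ∀ m : ℕ, BMW C a z m →ₗ[C] C)
    (ht : IsBMWStabIncl a z
      (((a : C) - ((a⁻¹ : Cˣ) : C)) * ((z⁻¹ : Cˣ) : C) + 1) t) :
    ∀ (m : ℕ) (k l : ℤ) (u v w : BMW C a z m),
      t (m + 2) (BMW.ιle (by omega) u *
          ((BMW.sU (⟨m, by omega⟩ : Fin (m + 2)) ^ k : (BMW C a z (m + 2))ˣ) : BMW C a z (m + 2)) *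
          BMW.ιle (by omega) v *
          ((BMW.sU (⟨m + 1, by omega⟩ : Fin (m + 2)) ^ l : (BMW C a z (m + 2))ˣ) : BMW C a z (m + 2)) *
          BMW.ιle (by omega) w)
        = t (m + 2) (BMW.ιle (by omega) u *
            ((BMW.sU (⟨m, by omega⟩ : Fin (m + 2)) ^ l : (BMW C a z (m + 2))ˣ) : BMW C a z (m + 2)) *
            BMW.ιle (by omega) v *
            ((BMW.sU (⟨m + 1, by omega⟩ : Fin (m + 2)) ^ k : (BMW C a z (m + 2))ˣ) : BMW C a z (m + 2)) *
            BMW.ιle (by omega) w) := by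
  intro m k l u v w
  obtain ⟨αk, βk, γk, hk⟩ := BMW.exists_zpow_sU_eq_comb (C := C) (a := a) (z := z) k
  obtain ⟨αl, βl, γl, hl⟩ := BMW.exists_zpow_sU_eq_comb (C := C) (a := a) (z := z) l
  simp only [hk, hl]
  calc _ = _ := ht.apply_comb_mul_comb_mul m αk βk γk αl βl γl u v w
    _ = _ := by ring
    _ = _ := (ht.apply_comb_mul_comb_mul m αl βl γl αk βk γk u v w).symm

end
end
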